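/- There are exactly 2 c-Wilf-equivalence classes of patterns of length 3: the orbit of 123 (namely {123, 321}) and the orbit of 132 (namely {132, 231, 213, 312}); i.e., α_n(123) = α_n(321) and α_n(132) = α_n(231) = α_n(213) = α_n(312) for all n. -/
import Mathlib


/-- The consecutive pattern `σ ∈ S m` occurs in `π ∈ S n` at (0-indexed) position `i`. -/
def occursAt {m n : ℕ} (σ : Equiv.Perm (Fin m)) (π : Equiv.Perm (Fin n)) (i : ℕ) : Prop :=
  ∃ h : i + m ≤ n, ∀ j k : Fin m,
    σ j < σ k ↔ π ⟨i + j, by have := j.isLt; omega⟩ < π ⟨i + k, by have := k.isLt; omega⟩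

/-- `α n σ`: the number of permutations of length `n` avoiding `σ` as a consecutive pattern. -/
noncomputable def avoiders {m : ℕ} (n : ℕ) (σ : Equiv.Perm (Fin m)) : ℕ :=
  Nat.card {π : Equiv.Perm (Fin n) // ∀ i : ℕ, ¬ occursAt σ π i}

def p123 : Equiv.Perm (Fin 3) := ⟨![0, 1, 2], ![0, 1, 2], by decide, by decide⟩
def p321 : Equiv.Perm (Fin 3) := ⟨![2, 1, 0], ![2, 1, 0], by decide, by decide⟩
def p132 : Equiv.Perm (Fin 3) := ⟨![0, 2, 1], ![0, 2, 1], by decide, by decide⟩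
def p231 : Equiv.Perm (Fin 3) := ⟨![1, 2, 0], ![2, 0, 1], by decide, by decide⟩
def p213 : Equiv.Perm (Fin 3) := ⟨![1, 0, 2], ![1, 0, 2], by decide, by decide⟩
def p312 : Equiv.Perm (Fin 3) := ⟨![2, 0, 1], ![1, 2, 0], by decide, by decide⟩

lemma rev_rev_eq {n : ℕ} (π : Equiv.Perm (Fin n)) :
    (π.trans Fin.revPerm).trans Fin.revPerm = π := by
  ext x
  simp [Fin.rev_rev]

lemma revl_revl_eq {n : ℕ} (π : Equiv.Perm (Fin n)) :
    Fin.revPerm.trans (Fin.revPerm.trans π) = π := by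
  ext x
  simp [Fin.rev_rev]

lemma occursAt_comp {m n : ℕ} {σ : Equiv.Perm (Fin m)} {π : Equiv.Perm (Fin n)} {i : ℕ}
    (H : occursAt σ π i) :
    occursAt (σ.trans Fin.revPerm) (π.trans Fin.revPerm) i := by
  obtain ⟨h, H⟩ := H
  refine ⟨h, fun j k => ?_⟩
  simpa [Fin.rev_lt_rev] using H k j

lemma occursAt_rev {m n : ℕ} {σ : Equiv.Perm (Fin m)} {π : Equiv.Perm (Fin n)} {i : ℕ}
    (H : occursAt (Fin.revPerm.trans σ) (Fin.revPerm.trans π) i) :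
    occursAt σ π (n - m - i) := by
  obtain ⟨h, H⟩ := H
  refine ⟨by omega, fun j k => ?_⟩
  have key := H j.rev k.rev
  simp only [Equiv.trans_apply, Fin.revPerm_apply, Fin.rev_rev] at key
  have e : ∀ (a : Fin m) (pf : i + (a.rev : ℕ) < n) (pf2 : n - m - i + (a : ℕ) < n),
      (⟨i + (a.rev : ℕ), pf⟩ : Fin n).rev = ⟨n - m - i + a, pf2⟩ := by
    intro a pf pf2
    have ha := a.isLt
    ext
    simp [Fin.val_rev]
    omega
  rw [e j (by have := j.rev.isLt; omega) (by have := j.isLt; omega),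
      e k (by have := k.rev.isLt; omega) (by have := k.isLt; omega)] at key
  exact key

lemma avoiders_comp {m : ℕ} (n : ℕ) (σ : Equiv.Perm (Fin m)) :
    avoiders n σ = avoiders n (σ.trans Fin.revPerm) := by
  unfold avoiders
  apply Nat.card_congr
  refine ⟨fun p => ⟨p.1.trans Fin.revPerm, fun i h => p.2 i ?_⟩,
          fun p => ⟨p.1.trans Fin.revPerm, fun i h => p.2 i ?_⟩,
          fun p => Subtype.ext (rev_rev_eq _), fun p => Subtype.ext (rev_rev_eq _)⟩
  · have := occursAt_comp h
    rwa [rev_rev_eq, rev_rev_eq] at this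
  · have := occursAt_comp h
    rwa [rev_rev_eq] at this

lemma avoiders_rev {m : ℕ} (n : ℕ) (σ : Equiv.Perm (Fin m)) :
    avoiders n σ = avoiders n (Fin.revPerm.trans σ) := by
  unfold avoiders
  apply Nat.card_congr
  refine ⟨fun p => ⟨Fin.revPerm.trans p.1, fun i h => p.2 (n - m - i) (occursAt_rev h)⟩,
          fun p => ⟨Fin.revPerm.trans p.1, fun i h => p.2 (n - m - i) ?_⟩,
          fun p => Subtype.ext (revl_revl_eq _), fun p => Subtype.ext (revl_revl_eq _)⟩
  have h' : occursAt (Fin.revPerm.trans (Fin.revPerm.trans σ)) (Fin.revPerm.trans p.1) i := by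
    rwa [revl_revl_eq]
  exact occursAt_rev h'

/-- The c-Wilf-equivalence classes of patterns of length 3: `{123, 321}` and
`{132, 231, 213, 312}`. -/
theorem cWilf_classes_length3 : ∀ n : ℕ,
    avoiders n p123 = avoiders n p321 ∧
    avoiders n p132 = avoiders n p231 ∧
    avoiders n p231 = avoiders n p213 ∧
    avoiders n p213 = avoiders n p312 := by
  intro n
  have e1 : p321 = p123.trans Fin.revPerm := Equiv.ext (by decide)
  have e2 : p231 = Fin.revPerm.trans p132 := Equiv.ext (by decide)
  have e3 : p213 = p231.trans Fin.revPerm := Equiv.ext (by decide)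
  have e4 : p312 = Fin.revPerm.trans p213 := Equiv.ext (by decide)
  exact ⟨e1 ▸ avoiders_comp n p123, e2 ▸ avoiders_rev n p132,
         e3 ▸ avoiders_comp n p231, e4 ▸ avoiders_rev n p213⟩
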